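/- There exists a normalized positive operator measure F on B([0,2π)) whose number-state distributions are all uniform but which is not phase shift covariant; e.g. F(X) = (2π)^{-1}∫_X dθ · I + (2π)^{-1}∫_X sin θ dθ · (|0⟩⟨1| + |1⟩⟨0|). -/

import Mathlib

open scoped Real
open MeasureTheory ContinuousLinearMap

/-- The cyclically shifted set `X ⊕ θ = {x ∈ [0,2π) | (x − θ) mod 2π ∈ X}`. -/
def shiftSet (X : Set ℝ) (θ : ℝ) : Set ℝ :=
  {x | x ∈ Set.Ico 0 (2 * π) ∧ 2 * π * Int.fract ((x - θ) / (2 * π)) ∈ X}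

/-!
Take `F(X) = (vol X / 2π) • 1 + ((∫_X sin) / 2π) • σ` with `σ = |0⟩⟨1| + |1⟩⟨0|`. Since `σ` is
self-adjoint of norm at most one and `|∫_X sin| ≤ vol X`, every `F(X)` is positive, and
`σ` has zero diagonal, so the number-state distributions are uniform. Conjugation by `R(θ)`
multiplies the matrix entry `⟨0|F(X)|1⟩` by `e^{-iθ}`; for `θ = π/2` and `X = [0,π)` this turns
the nonzero real number `1/π` into an imaginary one, whereas every `F(Y)` has a real
`⟨0|·|1⟩` entry.
-/

open scoped InnerProductSpace

lemma IsSelfAdjoint.smul_one_add_smul_nonneg {A : Type*} [CStarAlgebra A] [PartialOrder A]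
    [StarOrderedRing A] {t : A} (ht : IsSelfAdjoint t) (ht1 : ‖t‖ ≤ 1) {a b : ℝ}
    (hab : |b| ≤ a) : 0 ≤ a • (1 : A) + b • t := by
  have hlow : -algebraMap ℝ A ‖b • t‖ ≤ b • t :=
    ((IsSelfAdjoint.all b).smul ht).neg_algebraMap_norm_le_self
  have hnorm : ‖b • t‖ ≤ a :=
    calc ‖b • t‖ ≤ |b| * 1 := by rw [norm_smul, Real.norm_eq_abs]; gcongr
      _ ≤ a := by linarith
  rw [← Algebra.algebraMap_eq_smul_one]
  calc (0 : A) = algebraMap ℝ A ‖b • t‖ + -algebraMap ℝ A ‖b • t‖ := by abel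
    _ ≤ algebraMap ℝ A a + b • t := add_le_add (algebraMap_mono A hnorm) hlow

lemma setIntegral_sin_Ico {a b : ℝ} (hab : a ≤ b) :
    ∫ x in Set.Ico a b, Real.sin x = Real.cos a - Real.cos b := by
  rw [integral_Ico_eq_integral_Ioo, ← integral_Ioc_eq_integral_Ioo,
    ← intervalIntegral.integral_of_le hab, integral_sin]

lemma integrableOn_sin {s : Set ℝ} (hs : volume s ≠ ⊤) : IntegrableOn Real.sin s :=
  Measure.integrableOn_of_bounded hs Real.continuous_sin.aestronglyMeasurable
    (.of_forall fun x => by simpa using Real.abs_sin_le_one x)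

lemma abs_setIntegral_sin_le {s : Set ℝ} (hs : volume s ≠ ⊤) :
    |∫ x in s, Real.sin x| ≤ volume.real s := by
  simpa [Real.norm_eq_abs] using norm_setIntegral_le_of_norm_le_const (f := Real.sin) (C := 1)
    hs.lt_top (fun x _ => Real.abs_sin_le_one x)

section
variable {H : Type*} [NormedAddCommGroup H] [InnerProductSpace ℂ H] (e : HilbertBasis ℕ ℂ H)

/-- The operator `|0⟩⟨1| + |1⟩⟨0|`. -/
noncomputable def flip01 : H →L[ℂ] H :=
  (innerSL ℂ (e 1)).smulRight (e 0) + (innerSL ℂ (e 0)).smulRight (e 1)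

lemma flip01_apply (x : H) : flip01 e x = ⟪e 1, x⟫_ℂ • e 0 + ⟪e 0, x⟫_ℂ • e 1 := rfl

lemma isSelfAdjoint_flip01 [CompleteSpace H] : IsSelfAdjoint (flip01 e) := by
  rw [isSelfAdjoint_iff_isSymmetric]
  intro x y
  simp only [coe_coe, flip01_apply, inner_add_left, inner_add_right, inner_smul_left,
    inner_smul_right]
  rw [← inner_conj_symm x (e 1), ← inner_conj_symm x (e 0)]
  ring

lemma norm_flip01_le : ‖flip01 e‖ ≤ 1 := by
  refine opNorm_le_bound _ zero_le_one fun x => ?_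
  have horth : ⟪⟪e 1, x⟫_ℂ • e 0, ⟪e 0, x⟫_ℂ • e 1⟫_ℂ = 0 := by
    simp [e.orthonormal.inner_eq_zero (by decide : (0 : ℕ) ≠ 1)]
  have hbessel : ‖⟪e 0, x⟫_ℂ‖ ^ 2 + ‖⟪e 1, x⟫_ℂ‖ ^ 2 ≤ ‖x‖ ^ 2 := by
    simpa using e.orthonormal.sum_inner_products_le (s := {0, 1}) x
  have hsq : ‖flip01 e x‖ ^ 2 ≤ ‖x‖ ^ 2 := by
    rw [flip01_apply, sq, norm_add_sq_eq_norm_sq_add_norm_sq_of_inner_eq_zero _ _ horth]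
    simp only [norm_smul, e.orthonormal.1 0, e.orthonormal.1 1, mul_one]
    linarith
  rw [one_mul]
  exact (pow_le_pow_iff_left₀ (norm_nonneg _) (norm_nonneg _) two_ne_zero).1 hsq

noncomputable def sinPOM (X : Set ℝ) : H →L[ℂ] H :=
  (volume.real X / (2 * π)) • 1 + ((∫ θ in X, Real.sin θ) / (2 * π)) • flip01 e

lemma isPositive_sinPOM [CompleteSpace H] {X : Set ℝ} (hX : volume X ≠ ⊤) :
    (sinPOM e X).IsPositive := by
  rw [← nonneg_iff_isPositive]
  refine (isSelfAdjoint_flip01 e).smul_one_add_smul_nonneg (norm_flip01_le e) ?_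
  rw [abs_div, abs_of_pos Real.two_pi_pos]
  gcongr
  exact abs_setIntegral_sin_le hX

lemma sinPOM_Ico_zero_two_pi : sinPOM e (Set.Ico 0 (2 * π)) = 1 := by
  simp [sinPOM, setIntegral_sin_Ico Real.two_pi_pos.le, Real.two_pi_pos.ne', Real.two_pi_pos.le]

lemma hasSum_sinPOM_iUnion {ι : Type*} [Countable ι] {s : ι → Set ℝ}
    (hs : ∀ i, MeasurableSet (s i)) (hd : Pairwise (Function.onFun Disjoint s))
    (hfin : volume (⋃ i, s i) ≠ ⊤) :
    HasSum (fun i => sinPOM e (s i)) (sinPOM e (⋃ i, s i)) := by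
  have hvol : HasSum (fun i => volume.real (s i)) (volume.real (⋃ i, s i)) := by
    simpa using hasSum_integral_iUnion hs hd (integrableOn_const hfin (C := (1 : ℝ)))
  have hsin := hasSum_integral_iUnion hs hd (integrableOn_sin hfin)
  exact ((hvol.div_const _).smul_const 1).add ((hsin.div_const _).smul_const (flip01 e))

lemma inner_sinPOM (X : Set ℝ) (φ ψ : H) :
    ⟪φ, sinPOM e X ψ⟫_ℂ = ((volume.real X / (2 * π) : ℝ) : ℂ) * ⟪φ, ψ⟫_ℂ
      + (((∫ θ in X, Real.sin θ) / (2 * π) : ℝ) : ℂ) * ⟪φ, flip01 e ψ⟫_ℂ := by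
  simp only [sinPOM, add_apply, smul_apply, inner_add_right, ← Complex.coe_smul,
    inner_smul_right]
  rfl

lemma inner_basis_sinPOM_basis_self (n : ℕ) (X : Set ℝ) :
    ⟪e n, sinPOM e X (e n)⟫_ℂ = (((volume X).toReal / (2 * π) : ℝ) : ℂ) := by
  have hflip : ⟪e n, flip01 e (e n)⟫_ℂ = 0 := by
    rcases n with _ | _ | n <;> simp [flip01_apply, e.orthonormal.inner_eq_zero]
  simp [inner_sinPOM, hflip, e.orthonormal.1 n, measureReal_def]

lemma inner_basis_zero_sinPOM_basis_one (X : Set ℝ) :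
    ⟪e 0, sinPOM e X (e 1)⟫_ℂ = (((∫ θ in X, Real.sin θ) / (2 * π) : ℝ) : ℂ) := by
  simp [inner_sinPOM, flip01_apply, e.orthonormal.inner_eq_zero, e.orthonormal.1 0,
    e.orthonormal.1 1]

end

section PhaseShift
variable {H : Type*} [NormedAddCommGroup H] [InnerProductSpace ℂ H] [CompleteSpace H]
  {e : HilbertBasis ℕ ℂ H} {R : ℝ → H →L[ℂ] H}

def IsPhaseShiftCovariant (R : ℝ → H →L[ℂ] H) (F : Set ℝ → H →L[ℂ] H) : Prop :=
  ∀ X : Set ℝ, MeasurableSet X → X ⊆ Set.Ico 0 (2 * π) → ∀ θ : ℝ,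
    R θ ∘L F X ∘L adjoint (R θ) = F (shiftSet X θ)

lemma inner_basis_conj_apply_basis
    (hR : ∀ θ : ℝ, ∀ n : ℕ, R θ (e n) = Complex.exp (Complex.I * n * θ) • e n)
    (hRadj : ∀ θ : ℝ, adjoint (R θ) = R (-θ)) (A : H →L[ℂ] H) (θ : ℝ) (m n : ℕ) :
    ⟪e m, (R θ ∘L A ∘L adjoint (R θ)) (e n)⟫_ℂ
      = Complex.exp (Complex.I * (m - n) * θ) * ⟪e m, A (e n)⟫_ℂ := by
  have hadj : ∀ k : ℕ, adjoint (R θ) (e k) = Complex.exp (-(Complex.I * k * θ)) • e k := by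
    intro k
    simpa [hRadj] using hR (-θ) k
  rw [comp_apply, ← adjoint_inner_left, comp_apply, hadj, hadj, map_smul, inner_smul_left,
    inner_smul_right, ← mul_assoc, ← Complex.exp_conj, ← Complex.exp_add]
  congr 2
  simp only [map_neg, map_mul, Complex.conj_I, map_natCast, neg_mul, Complex.conj_ofReal, neg_neg]
  ring

lemma not_isPhaseShiftCovariant_sinPOM
    (hR : ∀ θ : ℝ, ∀ n : ℕ, R θ (e n) = Complex.exp (Complex.I * n * θ) • e n)
    (hRadj : ∀ θ : ℝ, adjoint (R θ) = R (-θ)) :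
    ¬ IsPhaseShiftCovariant R (sinPOM e) := by
  intro hcov
  have hsub : Set.Ico 0 π ⊆ Set.Ico 0 (2 * π) :=
    Set.Ico_subset_Ico_right (by linarith [Real.pi_pos])
  have h := congrArg (fun T => ⟪e 0, T (e 1)⟫_ℂ) (hcov _ measurableSet_Ico hsub (π / 2))
  simp only [inner_basis_conj_apply_basis hR hRadj, inner_basis_zero_sinPOM_basis_one] at h
  have hexp :
      Complex.exp (Complex.I * ((0 : ℕ) - (1 : ℕ) : ℂ) * ((π / 2 : ℝ) : ℂ)) = -Complex.I := by
    rw [show Complex.I * ((0 : ℕ) - (1 : ℕ) : ℂ) * ((π / 2 : ℝ) : ℂ) = -(π / 2 * Complex.I) by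
      push_cast; ring, Complex.exp_neg, Complex.exp_pi_div_two_mul_I, Complex.inv_I]
  rw [hexp, setIntegral_sin_Ico Real.pi_pos.le] at h
  have him := congrArg Complex.im h
  simp only [neg_mul, Complex.neg_im, Complex.mul_im, Complex.I_re, Complex.I_im,
    Complex.ofReal_re, Complex.ofReal_im, zero_mul, one_mul, zero_add] at him
  norm_num [Real.pi_ne_zero] at him

end PhaseShift

/-- There exists a normalized positive operator measure `F` on `B([0,2π))` whose
number-state distributions are all uniform, but which is not phase shift covariant
(e.g. `F(X) = (2π)⁻¹∫_X dθ · I + (2π)⁻¹∫_X sin θ dθ · (|0⟩⟨1| + |1⟩⟨0|)`). -/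
theorem stmt5 {H : Type*} [NormedAddCommGroup H] [InnerProductSpace ℂ H] [CompleteSpace H]
    (e : HilbertBasis ℕ ℂ H)
    (R : ℝ → (H →L[ℂ] H))
    (hR : ∀ θ : ℝ, ∀ n : ℕ, R θ (e n) = Complex.exp (Complex.I * n * θ) • e n)
    (hRadj : ∀ θ : ℝ, ContinuousLinearMap.adjoint (R θ) = R (-θ)) :
    ∃ F : Set ℝ → (H →L[ℂ] H),
      -- `F` is a POM: positivity, normalization, weak σ-additivity
      (∀ X : Set ℝ, MeasurableSet X → X ⊆ Set.Ico 0 (2 * π) → (F X).IsPositive) ∧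
      F (Set.Ico 0 (2 * π)) = 1 ∧
      (∀ f : ℕ → Set ℝ, (∀ n, MeasurableSet (f n)) →
        (∀ n, f n ⊆ Set.Ico 0 (2 * π)) → Pairwise (Function.onFun Disjoint f) →
        ∀ φ ψ : H, HasSum (fun n => (inner ℂ φ (F (f n) ψ) : ℂ)) (inner ℂ φ (F (⋃ n, f n) ψ))) ∧
      -- the number-state distributions are uniform
      (∀ n : ℕ, ∀ X : Set ℝ, MeasurableSet X → X ⊆ Set.Ico 0 (2 * π) →
        (inner ℂ (e n) (F X (e n)) : ℂ) = (((volume X).toReal / (2 * π) : ℝ) : ℂ)) ∧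
      -- but `F` is not phase shift covariant
      ¬ (∀ X : Set ℝ, MeasurableSet X → X ⊆ Set.Ico 0 (2 * π) → ∀ θ : ℝ,
        (R θ) ∘L (F X) ∘L ContinuousLinearMap.adjoint (R θ) = F (shiftSet X θ)) := by
  have hfin : ∀ {X : Set ℝ}, X ⊆ Set.Ico 0 (2 * π) → volume X ≠ ⊤ :=
    fun hX => measure_ne_top_of_subset hX measure_Ico_lt_top.ne
  refine ⟨sinPOM e, fun X _ hX => isPositive_sinPOM e (hfin hX), sinPOM_Ico_zero_two_pi e,
    fun f hf hsub hd φ ψ => ?_, fun n X _ _ => inner_basis_sinPOM_basis_self e n X,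
    not_isPhaseShiftCovariant_sinPOM hR hRadj⟩
  have hsum := hasSum_sinPOM_iUnion e hf hd (hfin (Set.iUnion_subset hsub))
  exact (innerSL ℂ φ).hasSum ((apply ℂ H ψ).hasSum hsum)
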